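/- Let k ≥ 1 and let G be a finite connected simple graph on exactly 2k vertices. Then there exist vertex subsets T₁, …, T_k of V(G) with |T₁| = 2 and |T_i| = 3 for 2 ≤ i ≤ k, each inducing a connected subgraph of G, such that T₁ ∪ ⋯ ∪ T_k = V(G), and for every i with 2 ≤ i ≤ k: |T_i ∩ (T₁ ∪ ⋯ ∪ T_{i−1})| = 1 and the subgraph of G induced on T₁ ∪ ⋯ ∪ T_i is connected. -/

import Mathlib

set_option linter.unusedSectionVars false

open SimpleGraph

section Aux

variable {V : Type} [DecidableEq V] (G : SimpleGraph V)

/-- Transfer a walk in an induced subgraph whose support lies in a smaller set. -/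
private lemma reach_transfer {s t : Set V} :
    ∀ {a b : (s : Set V)} (w : (G.induce s).Walk a b)
      (hw : ∀ v ∈ w.support, (v : V) ∈ t),
      (G.induce t).Reachable ⟨a, hw a w.start_mem_support⟩ ⟨b, hw b w.end_mem_support⟩ := by
  intro a b w
  induction w with
  | nil => intro hw; exact Reachable.refl _
  | @cons a c b h p ih =>
    intro hw
    have hadj : (G.induce t).Adj ⟨(a : V), hw a (by simp)⟩
        ⟨(c : V), hw c (by simp [SimpleGraph.Walk.support_cons])⟩ := by
      simp only [comap_adj, Function.Embedding.coe_subtype]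
      simpa using h
    exact (hadj.reachable).trans (ih fun v hv => hw v (by simp [SimpleGraph.Walk.support_cons, hv]))

/-- A path on three vertices induces a connected graph. -/
private lemma triple_connected {a b c : V} (h1 : G.Adj a b) (h2 : G.Adj b c) :
    (G.induce ({a, b, c} : Set V)).Connected := by
  rw [connected_iff_exists_forall_reachable]
  refine ⟨⟨b, by simp⟩, ?_⟩
  rintro ⟨x, hx⟩
  simp only [Set.mem_insert_iff, Set.mem_singleton_iff] at hx
  rcases hx with rfl | rfl | rfl
  · exact (show (G.induce ({x, b, c} : Set V)).Adj ⟨b, by simp⟩ ⟨x, by simp⟩ by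
      simpa using h1.symm).reachable
  · exact Reachable.refl _
  · exact (show (G.induce ({a, b, x} : Set V)).Adj ⟨b, by simp⟩ ⟨x, by simp⟩ by
      simpa using h2).reachable

/-- On a shortest walk, distances add up at every support vertex. -/
private lemma split_dist {W' : Type} [DecidableEq W'] {H : SimpleGraph W'} (hc : H.Connected)
    {r z : W'} (p : H.Walk r z) (hp : p.length = H.dist r z) {y : W'} (hy : y ∈ p.support) :
    H.dist r y = (p.takeUntil y hy).length ∧ H.dist y z = (p.dropUntil y hy).length ∧
      H.dist r y + H.dist y z = H.dist r z := by
  have h1 := SimpleGraph.dist_le (p.takeUntil y hy)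
  have h2 := SimpleGraph.dist_le (p.dropUntil y hy)
  have h3 : (p.takeUntil y hy).length + (p.dropUntil y hy).length = p.length := by
    rw [← SimpleGraph.Walk.length_append, SimpleGraph.Walk.take_spec]
  have h4 := hc.dist_triangle (u := r) (v := y) (w := z)
  omega

/-- Peeling lemma: from a connected induced subgraph on at least 3 vertices one can
remove two vertices `u, v` keeping connectivity, such that `{u, v, w}` induces a
connected graph for some remaining vertex `w`. -/
private lemma peel (S : Finset V) (hS : 3 ≤ S.card)
    (hconn : (G.induce (S : Set V)).Connected) :
    ∃ u v w : V, u ∈ S ∧ v ∈ S ∧ w ∈ S \ {u, v} ∧ u ≠ v ∧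
      (G.induce ({u, v, w} : Set V)).Connected ∧
      (G.induce ((S \ {u, v} : Finset V) : Set V)).Connected := by
  classical
  set H := G.induce (S : Set V) with hH
  have hSne : S.Nonempty := Finset.card_pos.mp (by omega)
  obtain ⟨r0, hr0⟩ := hSne
  have hr0' : r0 ∈ (S : Set V) := by simpa using hr0
  set r : (S : Set V) := ⟨r0, hr0'⟩ with hrdef
  obtain ⟨x, -, hx⟩ := Finset.exists_max_image (Finset.univ : Finset (S : Set V))
    (fun y => H.dist r y) ⟨r, Finset.mem_univ r⟩
  have hx' : ∀ y : (S : Set V), H.dist r y ≤ H.dist r x := fun y => hx y (Finset.mem_univ y)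
  by_cases hD : H.dist r x ≤ 1
  · -- all vertices adjacent to r
    have hadj : ∀ z : (S : Set V), z ≠ r → G.Adj r0 z := by
      intro z hz
      have h1 : H.dist r z ≤ 1 := le_trans (hx' z) hD
      have h2 : H.dist r z ≠ 0 := by
        intro h0
        exact hz ((hconn.dist_eq_zero_iff).mp h0).symm
      have h3 : H.Adj r z := SimpleGraph.dist_eq_one_iff_adj.mp (by omega)
      simpa [hH] using h3
    have hc2 : 2 ≤ (S \ {r0}).card := by
      have hsub0 : ({r0} : Finset V) ⊆ S := by simpa using hr0
      rw [Finset.card_sdiff_of_subset hsub0, Finset.card_singleton]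
      omega
    obtain ⟨u, hu, v, hv, huv⟩ := Finset.one_lt_card.mp (show 1 < (S \ {r0}).card by omega)
    obtain ⟨huS, hur⟩ := Finset.mem_sdiff.mp hu
    obtain ⟨hvS, hvr⟩ := Finset.mem_sdiff.mp hv
    have hur' : u ≠ r0 := by simpa using hur
    have hvr' : v ≠ r0 := by simpa using hvr
    have hau : G.Adj r0 u := hadj ⟨u, by simpa using huS⟩ (by simp [hrdef, hur'])
    have hav : G.Adj r0 v := hadj ⟨v, by simpa using hvS⟩ (by simp [hrdef, hvr'])
    refine ⟨u, v, r0, huS, hvS, ?_, huv, ?_, ?_⟩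
    · simp [hr0, Ne.symm hur', Ne.symm hvr']
    · have := triple_connected G hau.symm hav
      have hset : ({u, v, r0} : Set V) = ({u, r0, v} : Set V) := by
        ext y; simp; tauto
      rwa [hset]
    · rw [connected_iff_exists_forall_reachable]
      have hrmem : r0 ∈ ((S \ {u, v} : Finset V) : Set V) := by
        simp [hr0, Ne.symm hur', Ne.symm hvr']
      refine ⟨⟨r0, hrmem⟩, ?_⟩
      rintro ⟨z, hz⟩
      have hz' := hz
      simp only [Finset.coe_sdiff, Set.mem_diff, Finset.mem_coe, Finset.coe_insert,
        Finset.coe_singleton, Set.mem_insert_iff, Set.mem_singleton_iff] at hz'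
      by_cases hzr : z = r0
      · exact (show (⟨r0, hrmem⟩ : ((S \ {u,v} : Finset V) : Set V)) = ⟨z, hz⟩ from
          Subtype.ext hzr.symm) ▸ Reachable.refl _
      · have : G.Adj r0 z := hadj ⟨z, by simpa using hz'.1⟩ (by simp [hrdef, hzr])
        exact (show (G.induce ((S \ {u,v} : Finset V) : Set V)).Adj ⟨r0, hrmem⟩ ⟨z, hz⟩ by
          simpa using this).reachable
  · -- dist r x ≥ 2
    push_neg at hD
    have hrx : r ≠ x := by
      intro h; rw [← h, SimpleGraph.dist_self] at hD; omega
    obtain ⟨p0, hp0⟩ := (hconn r x).exists_walk_length_eq_dist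
    obtain ⟨p, hadjxp, p1, hp1⟩ := SimpleGraph.Walk.exists_eq_cons_of_ne (Ne.symm hrx) p0.reverse
    have hp1len : p1.length = H.dist r x - 1 := by
      have := congrArg SimpleGraph.Walk.length hp1
      simp only [SimpleGraph.Walk.length_cons, SimpleGraph.Walk.length_reverse] at this
      omega
    have hdp : H.dist r p = H.dist r x - 1 := by
      have h1 : H.dist p r ≤ p1.length := SimpleGraph.dist_le p1
      have h2 : H.dist r p = H.dist p r := SimpleGraph.dist_comm ..
      have h3 : H.dist r x ≤ H.dist r p + H.dist p x := hconn.dist_triangle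
      have h4 : H.dist p x ≤ 1 := by
        have : H.dist p x ≤ (SimpleGraph.Walk.cons hadjxp.symm SimpleGraph.Walk.nil).length :=
          SimpleGraph.dist_le _
        simpa using this
      omega
    -- generic avoidance of maximal-distance vertices on shortest walks
    have avoid_max : ∀ (z : (S : Set V)) (q : H.Walk r z), q.length = H.dist r z →
        ∀ (m : (S : Set V)), H.dist r m = H.dist r x → m ≠ z → m ∉ q.support := by
      intro z q hq m hm hmz hmem
      obtain ⟨-, -, hsum⟩ := split_dist hconn q hq hmem
      have h1 : H.dist r z ≤ H.dist r x := hx' z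
      have h2 : H.dist m z ≠ 0 := fun h0 => hmz ((hconn.dist_eq_zero_iff).mp h0)
      omega
    by_cases hy : ∃ y : (S : Set V), y ≠ x ∧ H.Adj p y ∧ H.dist r y = H.dist r x
    · obtain ⟨y, hyx, hpy, hydist⟩ := hy
      have hxy : (x : V) ≠ (y : V) := fun h => hyx (Subtype.ext h.symm)
      have hpx' : (p : V) ≠ (x : V) := by
        intro h
        have : p = x := Subtype.ext h
        rw [this] at hdp; omega
      have hpy' : (p : V) ≠ (y : V) := by
        intro h
        have : p = y := Subtype.ext h
        rw [this, hydist] at hdp; omega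
      have hGpx : G.Adj (p : V) (x : V) := by simpa [hH] using hadjxp.symm
      have hGpy : G.Adj (p : V) (y : V) := by simpa [hH] using hpy
      have hrx' : (r : V) ≠ (x : V) := fun h => hrx (Subtype.ext h)
      have hry' : (r : V) ≠ (y : V) := by
        intro h
        have : r = y := Subtype.ext h
        rw [← this, SimpleGraph.dist_self] at hydist; omega
      refine ⟨(x : V), (y : V), (p : V), by simpa using x.2, by simpa using y.2, ?_, hxy, ?_, ?_⟩
      · simp only [Finset.mem_sdiff, Finset.mem_insert, Finset.mem_singleton]
        exact ⟨by simpa using p.2, by push_neg; exact ⟨hpx', hpy'⟩⟩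
      · have := triple_connected G hGpx.symm hGpy
        have hset : ({(x:V), (y:V), (p:V)} : Set V) = ({(x:V), (p:V), (y:V)} : Set V) := by
          ext t; simp; tauto
        rwa [hset]
      · rw [connected_iff_exists_forall_reachable]
        have hrmem : (r : V) ∈ ((S \ {(x:V), (y:V)} : Finset V) : Set V) := by
          simp [hrx', hry']
        refine ⟨⟨(r : V), hrmem⟩, ?_⟩
        rintro ⟨z, hz⟩
        have hz2 : z ∈ S ∧ ¬z = (x : V) ∧ ¬z = (y : V) := by simpa using hz
        have hzS : z ∈ (S : Set V) := by simpa using hz2.1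
        have hzx : z ≠ (x : V) := hz2.2.1
        have hzy : z ≠ (y : V) := hz2.2.2
        obtain ⟨q, hq⟩ := (hconn r ⟨z, hzS⟩).exists_walk_length_eq_dist
        have hxs : x ∉ q.support := avoid_max ⟨z, hzS⟩ q hq x rfl
          (fun h => hzx (congrArg Subtype.val h).symm)
        have hys : y ∉ q.support := avoid_max ⟨z, hzS⟩ q hq y hydist
          (fun h => hzy (congrArg Subtype.val h).symm)
        have hsup : ∀ m ∈ q.support, (m : V) ∈ ((S \ {(x:V), (y:V)} : Finset V) : Set V) := by
          intro m hm
          simp only [Finset.coe_sdiff, Set.mem_diff, Finset.mem_coe, Finset.coe_insert,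
            Finset.coe_singleton, Set.mem_insert_iff, Set.mem_singleton_iff]
          refine ⟨by simpa using m.2, ?_⟩
          push_neg
          constructor
          · intro h; exact hxs (by rwa [show m = x from Subtype.ext h] at hm)
          · intro h; exact hys (by rwa [show m = y from Subtype.ext h] at hm)
        exact reach_transfer G q hsup
    · -- no other max-distance neighbor of p : remove x and p
      push_neg at hy
      have hrp : r ≠ p := by
        intro h; rw [← h, SimpleGraph.dist_self] at hdp; omega
      obtain ⟨q', hadjpq, p2, hp2⟩ := SimpleGraph.Walk.exists_eq_cons_of_ne
        (by intro h; exact hrp h.symm) p1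
      have hq'dist : H.dist r q' ≤ H.dist r x - 2 := by
        have h1 : H.dist q' r ≤ p2.length := SimpleGraph.dist_le p2
        have h2 := congrArg SimpleGraph.Walk.length hp2
        simp only [SimpleGraph.Walk.length_cons] at h2
        have h3 : H.dist r q' = H.dist q' r := SimpleGraph.dist_comm ..
        omega
      have hpx' : (p : V) ≠ (x : V) := by
        intro h; rw [show p = x from Subtype.ext h] at hdp; omega
      have hq'x : (q' : V) ≠ (x : V) := by
        intro h; rw [show q' = x from Subtype.ext h] at hq'dist; omega
      have hq'p : (q' : V) ≠ (p : V) := by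
        intro h; rw [show q' = p from Subtype.ext h, hdp] at hq'dist; omega
      have hGxp : G.Adj (x : V) (p : V) := by simpa [hH] using hadjxp
      have hGpq : G.Adj (p : V) (q' : V) := by simpa [hH] using hadjpq
      have hrx' : (r : V) ≠ (x : V) := fun h => hrx (Subtype.ext h)
      have hrp' : (r : V) ≠ (p : V) := fun h => hrp (Subtype.ext h)
      refine ⟨(x : V), (p : V), (q' : V), by simpa using x.2, by simpa using p.2, ?_,
        Ne.symm hpx', ?_, ?_⟩
      · simp only [Finset.mem_sdiff, Finset.mem_insert, Finset.mem_singleton]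
        exact ⟨by simpa using q'.2, by push_neg; exact ⟨hq'x, hq'p⟩⟩
      · exact triple_connected G hGxp hGpq
      · rw [connected_iff_exists_forall_reachable]
        have hrmem : (r : V) ∈ ((S \ {(x:V), (p:V)} : Finset V) : Set V) := by
          simp [hrx', hrp']
        refine ⟨⟨(r : V), hrmem⟩, ?_⟩
        rintro ⟨z, hz⟩
        have hz2 : z ∈ S ∧ ¬z = (x : V) ∧ ¬z = (p : V) := by simpa using hz
        have hzS : z ∈ (S : Set V) := by simpa using hz2.1
        have hzx : z ≠ (x : V) := hz2.2.1
        have hzp : z ≠ (p : V) := hz2.2.2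
        obtain ⟨q, hq⟩ := (hconn r ⟨z, hzS⟩).exists_walk_length_eq_dist
        have hxs : x ∉ q.support := avoid_max ⟨z, hzS⟩ q hq x rfl
          (fun h => hzx (congrArg Subtype.val h).symm)
        have hps : p ∉ q.support := by
          intro hmem
          obtain ⟨-, hd2, hsum⟩ := split_dist hconn q hq hmem
          -- the walk from p to z is a shortest walk of positive length
          have hppos : H.dist p ⟨z, hzS⟩ ≠ 0 := fun h0 =>
            hzp (congrArg Subtype.val ((hconn.dist_eq_zero_iff).mp h0)).symm
          obtain ⟨y', hadjpy, p3, hp3⟩ := SimpleGraph.Walk.exists_eq_cons_of_ne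
            (by intro h; exact hppos (by rw [h, SimpleGraph.dist_self])) (q.dropUntil p hmem)
          have h5 : H.dist y' ⟨z, hzS⟩ ≤ p3.length := SimpleGraph.dist_le p3
          have h6 := congrArg SimpleGraph.Walk.length hp3
          simp only [SimpleGraph.Walk.length_cons] at h6
          have h7 : H.dist r ⟨z, hzS⟩ ≤ H.dist r y' + H.dist y' ⟨z, hzS⟩ := hconn.dist_triangle
          have h8 : H.dist r y' ≤ H.dist r x := hx' y'
          have h9 : H.dist r ⟨z, hzS⟩ ≤ H.dist r x := hx' _
          -- conclude dist r y' = dist r x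
          have hy'dist : H.dist r y' = H.dist r x := by omega
          have hy'x : y' = x := by
            by_contra hne
            exact hne (False.elim (hy y' hne hadjpy hy'dist))
          -- x is on the support of q, contradiction
          apply hxs
          rw [← hy'x]
          have : y' ∈ (q.dropUntil p hmem).support := by
            rw [hp3]; simp [SimpleGraph.Walk.support_cons]
          exact SimpleGraph.Walk.support_dropUntil_subset q hmem this
        have hsup : ∀ m ∈ q.support, (m : V) ∈ ((S \ {(x:V), (p:V)} : Finset V) : Set V) := by
          intro m hm
          simp only [Finset.coe_sdiff, Set.mem_diff, Finset.mem_coe, Finset.coe_insert,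
            Finset.coe_singleton, Set.mem_insert_iff, Set.mem_singleton_iff]
          refine ⟨by simpa using m.2, ?_⟩
          push_neg
          constructor
          · intro h; exact hxs (by rwa [show m = x from Subtype.ext h] at hm)
          · intro h; exact hps (by rwa [show m = p from Subtype.ext h] at hm)
        exact reach_transfer G q hsup

end Aux

section Main

variable {V : Type} [Fintype V] [DecidableEq V]

private lemma aux_main (G : SimpleGraph V) : ∀ (k : ℕ), 1 ≤ k → ∀ (S : Finset V),
    S.card = 2 * k → (G.induce (S : Set V)).Connected →
    ∃ T : Fin k → Finset V,
      (∀ i : Fin k, i.val = 0 → (T i).card = 2) ∧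
      (∀ i : Fin k, 0 < i.val → (T i).card = 3) ∧
      (∀ i, (G.induce ((T i : Finset V) : Set V)).Connected) ∧
      Finset.univ.biUnion T = S ∧
      (∀ i : Fin k, 0 < i.val →
        (T i ∩ (Finset.Iio i).biUnion T).card = 1 ∧
        (G.induce (((Finset.Iic i).biUnion T : Finset V) : Set V)).Connected) := by
  intro k
  induction k with
  | zero => omega
  | succ n ih =>
    intro _ S hcard hconn
    by_cases hn : n = 0
    · subst hn
      refine ⟨fun _ => S, fun i _ => by show S.card = 2; omega,
        fun i hi => by have := i.isLt; omega, fun i => hconn, ?_, ?_⟩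
      · ext x; simp
      · intro i hi; have := i.isLt; omega
    · have hn1 : 1 ≤ n := by omega
      have h3 : 3 ≤ S.card := by omega
      obtain ⟨u, v, w, hu, hv, hw, huv, htri, hcomp⟩ := peel G S h3 hconn
      obtain ⟨hwS, hw2⟩ := Finset.mem_sdiff.mp hw
      have hwu : w ≠ u := by intro h; apply hw2; simp [h]
      have hwv : w ≠ v := by intro h; apply hw2; simp [h]
      have hsub : ({u, v} : Finset V) ⊆ S := by
        intro t ht; simp only [Finset.mem_insert, Finset.mem_singleton] at ht
        rcases ht with rfl | rfl <;> assumption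
      have hcard' : (S \ {u, v}).card = 2 * n := by
        rw [Finset.card_sdiff_of_subset hsub, Finset.card_insert_of_notMem (by simp [huv]),
          Finset.card_singleton]
        omega
      obtain ⟨T', hT0, hT3, hTc, hTu, hTlast⟩ := ih hn1 (S \ {u, v}) hcard' hcomp
      have conn_congr : ∀ {A B : Finset V}, A = B → (G.induce (B : Set V)).Connected →
          (G.induce (A : Set V)).Connected := by
        rintro A B rfl hB; exact hB
      have conn_congr_set : ∀ {A B : Set V}, A = B → (G.induce B).Connected →
          (G.induce A).Connected := by
        rintro A B rfl hB; exact hB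
      set Tn : Fin (n+1) → Finset V :=
        fun i => if h : i.val < n then T' ⟨i.val, h⟩ else {u, v, w} with hTn
      have hTlt : ∀ (i : Fin (n+1)) (h : i.val < n), Tn i = T' ⟨i.val, h⟩ := by
        intro i h; rw [hTn]; exact dif_pos h
      have hTge : ∀ (i : Fin (n+1)), ¬ i.val < n → Tn i = {u, v, w} := by
        intro i h; rw [hTn]; exact dif_neg h
      have hcw : ({u, v, w} : Finset V).card = 3 :=
        Finset.card_eq_three.mpr ⟨u, v, w, huv, Ne.symm hwu, Ne.symm hwv, rfl⟩
      have hUnion : Finset.univ.biUnion Tn = S := by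
        ext x
        simp only [Finset.mem_biUnion, Finset.mem_univ, true_and]
        constructor
        · rintro ⟨i, hxi⟩
          by_cases h : i.val < n
          · rw [hTlt i h] at hxi
            have hx2 : x ∈ Finset.univ.biUnion T' :=
              Finset.mem_biUnion.mpr ⟨⟨i.val, h⟩, Finset.mem_univ _, hxi⟩
            rw [hTu] at hx2
            exact (Finset.mem_sdiff.mp hx2).1
          · rw [hTge i h] at hxi
            simp only [Finset.mem_insert, Finset.mem_singleton] at hxi
            rcases hxi with rfl | rfl | rfl <;> assumption
        · intro hxS
          by_cases hx2 : x = u ∨ x = v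
          · refine ⟨⟨n, by omega⟩, ?_⟩
            rw [hTge ⟨n, by omega⟩ (by simp)]
            simp only [Finset.mem_insert, Finset.mem_singleton]; tauto
          · push_neg at hx2
            have hx3 : x ∈ S \ {u, v} := by
              simp only [Finset.mem_sdiff, Finset.mem_insert, Finset.mem_singleton]
              exact ⟨hxS, by push_neg; exact hx2⟩
            rw [← hTu] at hx3
            obtain ⟨j, -, hj⟩ := Finset.mem_biUnion.mp hx3
            refine ⟨⟨j.val, by omega⟩, ?_⟩
            rw [hTlt ⟨j.val, by omega⟩ j.isLt]
            exact hj
      refine ⟨Tn, ?_, ?_, ?_, hUnion, ?_⟩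
      · intro i hi
        have hlt : i.val < n := by omega
        rw [hTlt i hlt]
        exact hT0 ⟨i.val, hlt⟩ hi
      · intro i hi
        by_cases h : i.val < n
        · rw [hTlt i h]; exact hT3 ⟨i.val, h⟩ hi
        · rw [hTge i h]; exact hcw
      · intro i
        by_cases h : i.val < n
        · exact conn_congr (hTlt i h) (hTc ⟨i.val, h⟩)
        · exact conn_congr (hTge i h) (conn_congr_set (by simp) htri)
      · intro i hi
        by_cases h : i.val < n
        · have hIio : (Finset.Iio i).biUnion Tn
              = (Finset.Iio (⟨i.val, h⟩ : Fin n)).biUnion T' := by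
            ext x
            simp only [Finset.mem_biUnion, Finset.mem_Iio]
            constructor
            · rintro ⟨m, hm, hxm⟩
              have hmv : m.val < i.val := hm
              rw [hTlt m (by omega)] at hxm
              exact ⟨⟨m.val, by omega⟩, hmv, hxm⟩
            · rintro ⟨m, hm, hxm⟩
              have hmv : m.val < i.val := hm
              refine ⟨⟨m.val, by omega⟩, hmv, ?_⟩
              rw [hTlt ⟨m.val, by omega⟩ (by exact m.isLt)]
              exact hxm
          have hIic : (Finset.Iic i).biUnion Tn
              = (Finset.Iic (⟨i.val, h⟩ : Fin n)).biUnion T' := by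
            ext x
            simp only [Finset.mem_biUnion, Finset.mem_Iic]
            constructor
            · rintro ⟨m, hm, hxm⟩
              have hmv : m.val ≤ i.val := hm
              rw [hTlt m (by omega)] at hxm
              exact ⟨⟨m.val, by omega⟩, hmv, hxm⟩
            · rintro ⟨m, hm, hxm⟩
              have hmv : m.val ≤ i.val := hm
              refine ⟨⟨m.val, by omega⟩, hmv, ?_⟩
              rw [hTlt ⟨m.val, by omega⟩ (by exact m.isLt)]
              exact hxm
          have hj0 : 0 < (⟨i.val, h⟩ : Fin n).val := hi
          refine ⟨?_, ?_⟩
          · rw [hTlt i h, hIio]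
            exact (hTlast ⟨i.val, h⟩ hj0).1
          · exact conn_congr hIic (hTlast ⟨i.val, h⟩ hj0).2
        · have hIio : (Finset.Iio i).biUnion Tn = S \ {u, v} := by
            rw [← hTu]
            ext x
            simp only [Finset.mem_biUnion, Finset.mem_Iio, Finset.mem_univ, true_and]
            constructor
            · rintro ⟨m, hm, hxm⟩
              have hmv : m.val < i.val := hm
              rw [hTlt m (by omega)] at hxm
              exact ⟨⟨m.val, by omega⟩, hxm⟩
            · rintro ⟨m, hxm⟩
              have hmn := m.isLt
              refine ⟨⟨m.val, by omega⟩, ?_, ?_⟩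
              · show (m.val : ℕ) < i.val
                omega
              · rw [hTlt ⟨m.val, by omega⟩ (by exact m.isLt)]
                exact hxm
          refine ⟨?_, ?_⟩
          · rw [hTge i h, hIio]
            have hset : ({u, v, w} : Finset V) ∩ (S \ {u, v}) = {w} := by
              ext y
              simp only [Finset.mem_inter, Finset.mem_insert, Finset.mem_singleton,
                Finset.mem_sdiff]
              constructor
              · rintro ⟨hy1 | hy1 | hy1, hy2, hy3⟩
                · exact (hy3 (by simp [hy1])).elim
                · exact (hy3 (by simp [hy1])).elim
                · exact hy1
              · rintro rfl
                exact ⟨Or.inr (Or.inr rfl), hwS, by push_neg; exact ⟨hwu, hwv⟩⟩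
            rw [hset]
            exact Finset.card_singleton w
          · have hIic : (Finset.Iic i).biUnion Tn = Finset.univ.biUnion Tn := by
              refine Finset.biUnion_congr ?_ (fun a _ => rfl)
              ext m
              simp only [Finset.mem_Iic, Finset.mem_univ, iff_true, Fin.le_def]
              have := m.isLt
              omega
            exact conn_congr (hIic.trans hUnion) hconn

/-- Completeness of the multi-way join for even pattern sizes.
Every connected graph on `2k` vertices (`k ≥ 1`) is covered by connected vertex
subsets `T 0, …, T (k-1)`, where `T 0` has size 2 (an edge) and all other `T i`
have size 3, such that each `T i` (for `i ≥ 1`) meets the union of the previous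
ones in exactly one vertex and each partial union induces a connected
subgraph. -/
theorem multiway_join_complete_even
    {V : Type} [Fintype V] [DecidableEq V] (G : SimpleGraph V)
    (hG : G.Connected) (k : ℕ) (hk : 1 ≤ k)
    (hcard : Fintype.card V = 2 * k) :
    ∃ T : Fin k → Finset V,
      (∀ i : Fin k, i.val = 0 → (T i).card = 2) ∧
      (∀ i : Fin k, 0 < i.val → (T i).card = 3) ∧
      (∀ i, (G.induce ((T i : Finset V) : Set V)).Connected) ∧
      Finset.univ.biUnion T = Finset.univ ∧
      (∀ i : Fin k, 0 < i.val →
        (T i ∩ (Finset.Iio i).biUnion T).card = 1 ∧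
        (G.induce (((Finset.Iic i).biUnion T : Finset V) : Set V)).Connected) := by
  have h1 : (G.induce ((Finset.univ : Finset V) : Set V)).Connected := by
    rw [Finset.coe_univ]
    exact (G.induceUnivIso).connected_iff.mpr hG
  exact aux_main G k hk Finset.univ (by simpa using hcard) h1

end Main
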